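/- arXiv:1012.2508 — 3 statements merged into one kernel-verified Lean document; each statement's English description precedes it below -/
import Mathlib

section
/- Let α > d and θ > 0. Then the function q ↦ inf_{y ∈ ℝ^d} (C₀/|q+y|^α + |y|^θ) is integrable over ℝ^d, i.e. ∫_{ℝ^d} inf_{y ∈ ℝ^d} (C₀/|q+y|^α + |y|^θ) dq < ∞. -/
open MeasureTheory Filter Topology Set

/-- The cost function `q ↦ inf_y (C₀/|q+y|^α + |y|^θ)` is integrable on `ℝ^d`
when `α > d` and `θ > 0`. -/
theorem stmt_0 (d : ℕ) (hd : 1 ≤ d) (α θ C₀ : ℝ) (hα : (d : ℝ) < α) (hθ : 0 < θ)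
    (hC₀ : 0 < C₀) :
    Integrable (fun q : EuclideanSpace ℝ (Fin d) =>
      ⨅ y : EuclideanSpace ℝ (Fin d), (C₀ / ‖q + y‖ ^ α + ‖y‖ ^ θ)) := by
  have hd' : (0:ℝ) < d := by exact_mod_cast Nat.lt_of_lt_of_le Nat.zero_lt_one hd
  have hα0 : (0:ℝ) < α := lt_trans hd' hα
  set E := EuclideanSpace ℝ (Fin d) with hE
  set G : E → E → ℝ := fun q y => C₀ / ‖q + y‖ ^ α + ‖y‖ ^ θ with hG
  have hGnn : ∀ q y, 0 ≤ G q y := fun q y =>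
    add_nonneg (div_nonneg hC₀.le (Real.rpow_nonneg (norm_nonneg _) _))
      (Real.rpow_nonneg (norm_nonneg _) _)
  have hbdd : ∀ q, BddBelow (Set.range (G q)) :=
    fun q => ⟨0, fun x ⟨y, hy⟩ => hy ▸ hGnn q y⟩
  have hfnn : ∀ q, 0 ≤ ⨅ y, G q y := fun q => le_ciInf (hGnn q)
  have hGneg : ∀ q : E, G q (-q) = ‖q‖ ^ θ := by
    intro q
    simp [hG, Real.zero_rpow hα0.ne']
  have hG0 : ∀ q : E, G q 0 = C₀ / ‖q‖ ^ α := by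
    intro q
    simp [hG, Real.zero_rpow hθ.ne']
  obtain ⟨u, hu⟩ := TopologicalSpace.exists_dense_seq E
  -- the inf equals a countable min
  have key : ∀ q : E, (⨅ y, G q y) = min (‖q‖ ^ θ) (⨅ i, G q (u i)) := by
    intro q
    apply le_antisymm
    · apply le_min
      · rw [← hGneg q]; exact ciInf_le (hbdd q) _
      · exact le_ciInf fun i => ciInf_le (hbdd q) _
    · apply le_ciInf; intro y
      by_cases hy : y = -q
      · subst hy; rw [hGneg]; exact min_le_left _ _
      · refine le_trans (min_le_right _ _) ?_
        have hqy : q + y ≠ 0 := by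
          intro h
          apply hy
          have : y = -q := by
            have := congrArg (fun z => z - q) h
            simpa [add_sub_cancel_left, sub_eq_add_neg, add_comm] using this
          exact this
        have hnorm : ‖q + y‖ ≠ 0 := norm_ne_zero_iff.mpr hqy
        have hcont : ContinuousAt (G q) y := by
          apply ContinuousAt.add
          · apply ContinuousAt.div continuousAt_const
            · exact ContinuousAt.rpow_const
                ((continuous_const.add continuous_id).norm.continuousAt) (Or.inl hnorm)
            · exact (Real.rpow_pos_of_pos (norm_pos_iff.mpr hqy) α).ne'
          · exact continuous_norm.continuousAt.rpow_const (Or.inr hθ.le)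
        refine le_of_forall_pos_le_add fun ε hε => ?_
        have h1 : {z : E | G q z < G q y + ε} ∈ 𝓝 y :=
          hcont.preimage_mem_nhds (Iio_mem_nhds (by linarith))
        obtain ⟨z, hz1, i, hi⟩ := mem_closure_iff_nhds.mp (hu y) _ h1
        subst hi
        exact le_trans (ciInf_le (by exact ⟨0, fun x ⟨j, hj⟩ => hj ▸ hGnn q (u j)⟩) i) hz1.le
  have hmeas : Measurable (fun q : E => min (‖q‖ ^ θ) (⨅ i, G q (u i))) := by
    apply Measurable.min
    · exact (continuous_norm.rpow_const (fun x => Or.inr hθ.le)).measurable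
    · apply Measurable.iInf
      intro i
      apply Measurable.add
      · apply Measurable.div measurable_const
        exact ((continuous_id.add continuous_const).norm.rpow_const
          (fun x => Or.inr hα0.le)).measurable
      · exact measurable_const
  have hg : Integrable (fun q : E => (1 + C₀) * 2 ^ α * ((1 + ‖q‖) ^ α)⁻¹) := by
    apply Integrable.const_mul
    have heq : (fun q : E => ((1 + ‖q‖) ^ α)⁻¹) = fun q : E => (1 + ‖q‖) ^ (-α) := by
      funext q; rw [Real.rpow_neg (by positivity)]
    rw [heq]
    exact integrable_one_add_norm (by rwa [finrank_euclideanSpace_fin])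
  have hfun : (fun q : E => ⨅ y, G q y)
      = fun q : E => min (‖q‖ ^ θ) (⨅ i, G q (u i)) := funext key
  rw [show (fun q : E => ⨅ y : E, (C₀ / ‖q + y‖ ^ α + ‖y‖ ^ θ)) = fun q : E => ⨅ y, G q y from rfl,
    hfun]
  refine hg.mono' hmeas.aestronglyMeasurable (ae_of_all _ fun q => ?_)
  have h2α : (0:ℝ) < 2 ^ α := Real.rpow_pos_of_pos two_pos α
  have h1q : (0:ℝ) < (1 + ‖q‖) ^ α := Real.rpow_pos_of_pos (by positivity) α
  have hmin_nn : 0 ≤ min (‖q‖ ^ θ) (⨅ i, G q (u i)) :=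
    le_min (Real.rpow_nonneg (norm_nonneg _) _) (le_ciInf fun i => hGnn q (u i))
  rw [Real.norm_of_nonneg hmin_nn]
  rcases le_or_gt ‖q‖ 1 with hq | hq
  · have hb1 : min (‖q‖ ^ θ) (⨅ i, G q (u i)) ≤ 1 :=
      le_trans (min_le_left _ _) (Real.rpow_le_one (norm_nonneg _) hq hθ.le)
    have hpow : (1 + ‖q‖) ^ α ≤ 2 ^ α :=
      Real.rpow_le_rpow (by positivity) (by linarith) hα0.le
    have : (1:ℝ) ≤ 2 ^ α * ((1 + ‖q‖) ^ α)⁻¹ := by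
      rw [← div_eq_mul_inv, le_div_iff₀ h1q, one_mul]
      exact hpow
    nlinarith [mul_pos h2α (inv_pos.mpr h1q)]
  · have hb2 : min (‖q‖ ^ θ) (⨅ i, G q (u i)) ≤ C₀ / ‖q‖ ^ α := by
      rw [← key q, ← hG0 q]
      exact ciInf_le (hbdd q) _
    have hqpos : (0:ℝ) < ‖q‖ := lt_trans one_pos hq
    have hqα : (0:ℝ) < ‖q‖ ^ α := Real.rpow_pos_of_pos hqpos α
    have hpow : (1 + ‖q‖) ^ α ≤ 2 ^ α * ‖q‖ ^ α := by
      rw [← Real.mul_rpow (by norm_num) hqpos.le]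
      exact Real.rpow_le_rpow (by positivity) (by linarith) hα0.le
    have h3 : C₀ / ‖q‖ ^ α ≤ (1 + C₀) * 2 ^ α * ((1 + ‖q‖) ^ α)⁻¹ := by
      rw [← div_eq_mul_inv, div_le_div_iff₀ hqα h1q]
      nlinarith [hpow, hqα.le, hC₀.le, mul_le_mul_of_nonneg_left hpow hC₀.le]
    exact hb2.trans h3
end

section
/- Let d = 1, θ > 0, and let (ξ_q)_{q ∈ ℤ} be i.i.d. real random variables with density exp(-|x|^θ)/Z(1,θ). For t > 0 let I_k be the connected components of (-t/2, t/2) \ {q + ξ_q : q ∈ ℤ}. Then for every ε ∈ (0,1) and all 3 ≤ s ≤ t, P(sup_k |I_k| ≥ s) ≤ t · exp( -(2(1-ε)/(θ+1)) ((s-3)/2)^{θ+1} + (s/θ) log(1/ε) ). -/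
/-!
If `(a, b) ⊆ (-t/2, t/2)` is a gap of length at least `s` and `m = ⌊a⌋`, then each site
`q = m + 2 + i` with `i < ⌈s - 3⌉` must have been pushed out of the gap, so
`|ξ_q| ≥ min (i + 1) (s - 3 - i)`. A union bound over the at most `t` possible values of `m`
and independence reduce the claim to one-site tails. Writing
`exp (-|x|^θ) = exp (-(1 - ε) |x|^θ) · exp (-ε |x|^θ)` and rescaling `x ↦ ε^{1/θ} x` gives
`P (|ξ| ≥ r) ≤ ε^{-1/θ} exp (-(1 - ε) r^θ)`; finally `∑ min (i + 1) (s - 3 - i)^θ` dominates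
the integral of the tent function over `[0, s - 3]`, which is `2 ((s - 3)/2)^{θ+1} / (θ + 1)`.
-/

open MeasureTheory Real Set

lemma withDensity_exp_neg_abs_rpow_tail_le {θ ε Z r : ℝ} (hθ : 0 < θ) (hε : 0 < ε)
    (hε1 : ε ≤ 1) (hr : 0 ≤ r) :
    volume.withDensity (fun x => ENNReal.ofReal (exp (-|x| ^ θ) / Z)) {x | r ≤ |x|}
      ≤ ENNReal.ofReal (ε ^ (-θ⁻¹) * exp (-((1 - ε) * r ^ θ)))
        * volume.withDensity (fun x => ENNReal.ofReal (exp (-|x| ^ θ) / Z)) univ := by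
  set f : ℝ → ENNReal := fun x => ENNReal.ofReal (exp (-|x| ^ θ) / Z)
  set l : ℝ := ε ^ θ⁻¹
  have hl : 0 < l := rpow_pos_of_pos hε _
  have hsplit (x : ℝ) : f x = ENNReal.ofReal (exp (-((1 - ε) * |x| ^ θ))) * f (l * x) := by
    have : |l * x| ^ θ = ε * |x| ^ θ := by
      rw [abs_mul, abs_of_pos hl, mul_rpow hl.le (abs_nonneg x), ← rpow_mul hε.le,
        inv_mul_cancel₀ hθ.ne', rpow_one]
    simp only [f, this, ← ENNReal.ofReal_mul (exp_pos _).le, ← mul_div_assoc, ← exp_add]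
    ring_nf
  have hS : MeasurableSet {x : ℝ | r ≤ |x|} := measurableSet_le measurable_const measurable_abs
  rw [withDensity_apply _ hS, withDensity_apply _ MeasurableSet.univ, Measure.restrict_univ]
  calc ∫⁻ x in {x | r ≤ |x|}, f x
      ≤ ∫⁻ x in {x | r ≤ |x|}, ENNReal.ofReal (exp (-((1 - ε) * r ^ θ))) * f (l * x) := by
        refine setLIntegral_mono' hS fun x hx => ?_
        rw [hsplit x]
        gcongr
        exact hx
    _ ≤ ∫⁻ x, ENNReal.ofReal (exp (-((1 - ε) * r ^ θ))) * f (l * x) :=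
        setLIntegral_le_lintegral _ _
    _ = ENNReal.ofReal (exp (-((1 - ε) * r ^ θ))) * (ENNReal.ofReal l⁻¹ * ∫⁻ x, f x) := by
        rw [lintegral_const_mul' _ _ ENNReal.ofReal_ne_top,
          ← (measurableEmbedding_mulLeft₀ hl.ne').lintegral_map, map_volume_mul_left hl.ne',
          lintegral_smul_measure, abs_of_pos (inv_pos.2 hl), smul_eq_mul]
    _ = _ := by
        rw [← mul_assoc, ← ENNReal.ofReal_mul (exp_pos _).le, mul_comm (exp _),
          ← rpow_neg hε.le]

lemma measure_biInter_abs_ge_le {Ω ι : Type*} [MeasurableSpace Ω] {P : Measure Ω}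
    [IsProbabilityMeasure P] {θ ε Z : ℝ} (hθ : 0 < θ) (hε : 0 < ε) (hε1 : ε ≤ 1)
    {ξ : ι → Ω → ℝ} (hmeas : ∀ i, Measurable (ξ i)) (hindep : ProbabilityTheory.iIndepFun ξ P)
    (hlaw : ∀ i, Measure.map (ξ i) P
      = volume.withDensity (fun x => ENNReal.ofReal (exp (-|x| ^ θ) / Z)))
    (S : Finset ι) {r : ι → ℝ} (hr : ∀ i ∈ S, 0 ≤ r i) :
    P (⋂ i ∈ S, ξ i ⁻¹' {x | r i ≤ |x|})
      ≤ ENNReal.ofReal ((ε ^ (-θ⁻¹)) ^ S.card * exp (-((1 - ε) * ∑ i ∈ S, r i ^ θ))) := by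
  have hS (i : ι) : MeasurableSet {x : ℝ | r i ≤ |x|} :=
    measurableSet_le measurable_const measurable_abs
  have htail : ∀ i ∈ S, P (ξ i ⁻¹' {x | r i ≤ |x|})
      ≤ ENNReal.ofReal (ε ^ (-θ⁻¹) * exp (-((1 - ε) * r i ^ θ))) := fun i hi => by
    have h := withDensity_exp_neg_abs_rpow_tail_le (Z := Z) hθ hε hε1 (hr i hi)
    rwa [← hlaw i, Measure.map_apply (hmeas i) (hS i), Measure.map_apply (hmeas i) .univ,
      preimage_univ, measure_univ, mul_one] at h
  rw [hindep.measure_inter_preimage_eq_mul S fun i _ => hS i]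
  refine (Finset.prod_le_prod' htail).trans_eq ?_
  rw [← ENNReal.ofReal_prod_of_nonneg fun i _ => by positivity, Finset.prod_mul_distrib,
    Finset.prod_const, ← exp_sum, Finset.mul_sum, ← Finset.sum_neg_distrib]

lemma min_sub_le_abs_of_add_notMem_Ioo {a b q y : ℝ} (h : q + y ∉ Ioo a b) :
    min (q - a) (b - q) ≤ |y| := by
  rw [mem_Ioo, not_and_or, not_lt, not_lt] at h
  rcases h with h | h
  · exact (min_le_left _ _).trans (by linarith [neg_le_abs y])
  · exact (min_le_right _ _).trans (by linarith [le_abs_self y])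

lemma min_le_abs_of_forall_notMem_Ioo {y : ℤ → ℝ} {a b s : ℝ} (hab : s ≤ b - a)
    (hgap : ∀ q : ℤ, (q : ℝ) + y q ∉ Ioo a b) (i : ℕ) :
    min ((i : ℝ) + 1) (s - 2 - i) ≤ |y (⌊a⌋ + 2 + i)| := by
  refine (min_le_min ?_ ?_).trans (min_sub_le_abs_of_add_notMem_Ioo (hgap _))
  · push_cast; linarith [Int.lt_floor_add_one a]
  · push_cast; linarith [Int.floor_le a]

lemma card_Icc_floor_floor_le {u v : ℝ} (h : u ≤ v + 2) :
    ((Finset.Icc ⌊u⌋ ⌊v⌋).card : ℝ) ≤ v - u + 2 := by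
  have hcast : ((Finset.Icc ⌊u⌋ ⌊v⌋).card : ℝ) = max ((⌊v⌋ + 1 - ⌊u⌋ : ℤ) : ℝ) 0 := by
    rw [Int.card_Icc, ← Int.cast_natCast, Int.toNat_eq_max, Int.cast_max, Int.cast_zero]
  rw [hcast]
  refine max_le ?_ (by linarith)
  push_cast
  linarith [Int.floor_le v, Int.lt_floor_add_one u]

def tent (c x : ℝ) : ℝ := max (min x (c - x)) 0

lemma continuous_tent_rpow (c : ℝ) {θ : ℝ} (hθ : 0 ≤ θ) : Continuous fun x => tent c x ^ θ :=
  ((continuous_id.min (continuous_const.sub continuous_id)).max continuous_const).rpow_const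
    fun _ => Or.inr hθ

lemma integral_tent_rpow {c θ : ℝ} (hc : 0 ≤ c) (hθ : 0 ≤ θ) :
    ∫ x in 0..c, tent c x ^ θ = 2 * (c / 2) ^ (θ + 1) / (θ + 1) := by
  have hint (a b : ℝ) : IntervalIntegrable (fun x => tent c x ^ θ) volume a b :=
    (continuous_tent_rpow c hθ).intervalIntegrable a b
  have hleft : ∫ x in 0..c / 2, tent c x ^ θ = ∫ x in 0..c / 2, x ^ θ := by
    refine intervalIntegral.integral_congr fun x hx => ?_
    rw [uIcc_of_le (by linarith)] at hx
    rw [tent, min_eq_left (by linarith [hx.2]), max_eq_left hx.1]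
  have hright : ∫ x in c / 2..c, tent c x ^ θ = ∫ x in 0..c / 2, x ^ θ := by
    have hflip := intervalIntegral.integral_comp_sub_left (fun x => x ^ θ) (a := c / 2) (b := c) c
    rw [sub_self, sub_half] at hflip
    rw [← hflip]
    refine intervalIntegral.integral_congr fun x hx => ?_
    rw [uIcc_of_le (by linarith)] at hx
    rw [tent, min_eq_right (by linarith [hx.1]), max_eq_left (by linarith [hx.2])]
  rw [← intervalIntegral.integral_add_adjacent_intervals (hint 0 (c / 2)) (hint (c / 2) c),
    hleft, hright, integral_rpow (Or.inl (by linarith)), zero_rpow (by linarith)]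
  ring

lemma integral_tent_rpow_le_sum {c θ : ℝ} (hc : 0 ≤ c) (hθ : 0 ≤ θ) :
    ∫ x in 0..c, tent c x ^ θ ≤ ∑ i ∈ Finset.range ⌈c⌉₊, min ((i : ℝ) + 1) (c - i) ^ θ := by
  have hint (a b : ℝ) : IntervalIntegrable (fun x => tent c x ^ θ) volume a b :=
    (continuous_tent_rpow c hθ).intervalIntegrable a b
  have hunit : ∀ i ∈ Finset.range ⌈c⌉₊,
      ∫ x in (i : ℝ)..(i + 1 : ℕ), tent c x ^ θ ≤ min ((i : ℝ) + 1) (c - i) ^ θ := by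
    intro i hi
    have hle : ∀ x ∈ Icc (i : ℝ) (i + 1 : ℕ), tent c x ^ θ ≤ min ((i : ℝ) + 1) (c - i) ^ θ := by
      intro x hx
      push_cast at hx
      exact rpow_le_rpow (le_max_right _ _) (max_le (min_le_min hx.2 (by linarith [hx.1]))
        (le_min (by positivity) (sub_nonneg.2 (Nat.lt_ceil.1 (Finset.mem_range.1 hi)).le))) hθ
    simpa using intervalIntegral.integral_mono_on (by simp) (hint _ _) intervalIntegrable_const hle
  calc ∫ x in 0..c, tent c x ^ θ
      ≤ ∫ x in 0..(⌈c⌉₊ : ℕ), tent c x ^ θ :=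
        intervalIntegral.integral_mono_interval le_rfl hc (Nat.le_ceil c)
          (.of_forall fun x => rpow_nonneg (le_max_right _ _) θ) (hint _ _)
    _ = ∑ i ∈ Finset.range ⌈c⌉₊, ∫ x in (i : ℝ)..(i + 1 : ℕ), tent c x ^ θ := by
        rw [intervalIntegral.sum_integral_adjacent_intervals fun k _ => hint _ _, Nat.cast_zero]
    _ ≤ _ := Finset.sum_le_sum hunit

lemma rpow_neg_inv_pow_le_exp {θ ε s : ℝ} {N : ℕ} (hθ : 0 < θ) (hε : 0 < ε) (hε1 : ε ≤ 1)
    (hN : (N : ℝ) ≤ s) : (ε ^ (-θ⁻¹)) ^ N ≤ exp (s / θ * log (1 / ε)) := by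
  rw [rpow_def_of_pos hε, ← exp_nat_mul, exp_le_exp, one_div, log_inv]
  calc (N : ℝ) * (log ε * -θ⁻¹) = N / θ * -log ε := by ring
    _ ≤ s / θ * -log ε := by
      gcongr
      exact neg_nonneg.2 (log_nonpos hε.le hε1)

lemma rpow_neg_inv_pow_mul_exp_neg_sum_le {θ ε s : ℝ} (hθ : 0 < θ) (hε : 0 < ε) (hε1 : ε ≤ 1)
    (hs : 3 ≤ s) :
    (ε ^ (-θ⁻¹)) ^ ⌈s - 3⌉₊
        * exp (-((1 - ε) * ∑ i ∈ Finset.range ⌈s - 3⌉₊, min ((i : ℝ) + 1) (s - 3 - i) ^ θ))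
      ≤ exp (-(2 * (1 - ε) / (θ + 1)) * ((s - 3) / 2) ^ (θ + 1) + s / θ * log (1 / ε)) := by
  have hsum := (integral_tent_rpow (by linarith) hθ.le).symm.trans_le
    (integral_tent_rpow_le_sum (c := s - 3) (by linarith) hθ.le)
  rw [exp_add, mul_comm (exp _)]
  refine mul_le_mul (rpow_neg_inv_pow_le_exp hθ hε hε1 ?_) (exp_le_exp.2 ?_)
    (by positivity) (by positivity)
  · linarith [Nat.ceil_lt_add_one (by linarith : (0 : ℝ) ≤ s - 3)]
  · rw [show -(2 * (1 - ε) / (θ + 1)) * ((s - 3) / 2) ^ (θ + 1)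
        = -((1 - ε) * (2 * ((s - 3) / 2) ^ (θ + 1) / (θ + 1))) by ring]
    exact neg_le_neg (mul_le_mul_of_nonneg_left hsum (by linarith))

theorem stmt_7_general (θ : ℝ) (hθ : 0 < θ)
    (Z : ℝ)
    {Ω : Type*} [MeasurableSpace Ω] (P : Measure Ω) [IsProbabilityMeasure P]
    (ξ : ℤ → Ω → ℝ) (hmeas : ∀ q, Measurable (ξ q))
    (hindep : ProbabilityTheory.iIndepFun ξ P)
    (hlaw : ∀ q, Measure.map (ξ q) P
      = volume.withDensity (fun x => ENNReal.ofReal (Real.exp (-|x| ^ θ) / Z))) :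
    ∀ ε : ℝ, 0 < ε → ε < 1 → ∀ s t : ℝ, 3 ≤ s → s ≤ t →
      P {ω | ∃ a b : ℝ, -t / 2 ≤ a ∧ b ≤ t / 2 ∧ s ≤ b - a ∧
          ∀ q : ℤ, (q : ℝ) + ξ q ω ∉ Set.Ioo a b}
        ≤ ENNReal.ofReal (t * Real.exp (-(2 * (1 - ε) / (θ + 1)) * ((s - 3) / 2) ^ (θ + 1)
            + (s / θ) * Real.log (1 / ε))) := by
  intro ε hε hε1 s t hs hst
  set N := ⌈s - 3⌉₊
  set r : ℕ → ℝ := fun i => min ((i : ℝ) + 1) (s - 3 - i)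
  set F := Finset.Icc ⌊-t / 2⌋ ⌊t / 2 - s⌋
  set E : ℤ → Set Ω := fun m => ⋂ i ∈ Finset.range N, ξ (m + 2 + i) ⁻¹' {x | r i ≤ |x|}
  set K := (ε ^ (-θ⁻¹)) ^ N * exp (-((1 - ε) * ∑ i ∈ Finset.range N, r i ^ θ))
  have hE (m : ℤ) : P (E m) ≤ ENNReal.ofReal K := by
    simpa only [Finset.card_range] using measure_biInter_abs_ge_le hθ hε hε1.le (fun i => hmeas _)
      (hindep.precomp (g := fun i : ℕ => m + 2 + i) fun i j h => by simpa using h)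
      (fun i => hlaw _) (Finset.range N)
      fun i hi => le_min (by positivity) (sub_nonneg.2 (Nat.lt_ceil.1 (Finset.mem_range.1 hi)).le)
  have hcard : (F.card : ℝ) ≤ t := (card_Icc_floor_floor_le (by linarith)).trans (by linarith)
  calc _ ≤ P (⋃ m ∈ F, E m) := by
        refine measure_mono fun ω ⟨a, b, hta, hbt, hab, hgap⟩ => mem_biUnion (x := ⌊a⌋)
          (Finset.mem_Icc.2 ⟨Int.floor_le_floor hta, Int.floor_le_floor (by linarith)⟩)
          (mem_iInter₂.2 fun i _ => ?_)
        exact (min_le_min_left _ (by linarith)).trans (min_le_abs_of_forall_notMem_Ioo hab hgap i)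
    _ ≤ ∑ m ∈ F, ENNReal.ofReal K :=
        (measure_biUnion_finset_le F E).trans (Finset.sum_le_sum fun m _ => hE m)
    _ = ENNReal.ofReal (F.card * K) := by
        rw [Finset.sum_const, nsmul_eq_mul, ENNReal.ofReal_mul (Nat.cast_nonneg _),
          ENNReal.ofReal_natCast]
    _ ≤ _ := ENNReal.ofReal_le_ofReal (mul_le_mul hcard
        (rpow_neg_inv_pow_mul_exp_neg_sum_le hθ hε hε1.le hs) (by positivity) (by linarith))

/-- One-dimensional gap estimate: for i.i.d. displacements with density `exp(-|x|^θ)/Z(1,θ)`,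
the probability that the complement of the perturbed lattice points in `(-t/2, t/2)` has a
connected component (gap) of length at least `s` is at most
`t · exp(-(2(1-ε)/(θ+1)) ((s-3)/2)^{θ+1} + (s/θ) log(1/ε))` for `3 ≤ s ≤ t`, `ε ∈ (0,1)`. -/
theorem stmt_7 (θ : ℝ) (hθ : 0 < θ)
    (Z : ℝ) (hZ : Z = ∫ x : ℝ, Real.exp (-|x| ^ θ))
    {Ω : Type*} [MeasurableSpace Ω] (P : Measure Ω) [IsProbabilityMeasure P]
    (ξ : ℤ → Ω → ℝ) (hmeas : ∀ q, Measurable (ξ q))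
    (hindep : ProbabilityTheory.iIndepFun ξ P)
    (hlaw : ∀ q, Measure.map (ξ q) P
      = volume.withDensity (fun x => ENNReal.ofReal (Real.exp (-|x| ^ θ) / Z))) :
    ∀ ε : ℝ, 0 < ε → ε < 1 → ∀ s t : ℝ, 3 ≤ s → s ≤ t →
      P {ω | ∃ a b : ℝ, -t / 2 ≤ a ∧ b ≤ t / 2 ∧ s ≤ b - a ∧
          ∀ q : ℤ, (q : ℝ) + ξ q ω ∉ Set.Ioo a b}
        ≤ ENNReal.ofReal (t * Real.exp (-(2 * (1 - ε) / (θ + 1)) * ((s - 3) / 2) ^ (θ + 1)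
            + (s / θ) * Real.log (1 / ε))) :=
  stmt_7_general θ hθ Z P ξ hmeas hindep hlaw
end

section
/- For θ > 0, h > 0 and constants c₆ ≥ 0, the infimum over R > 3 of the function F(R) = t h π²/(R + c₆)² + (1/(2^θ(θ+1)))(R-3)^{θ+1} satisfies lim_{t→∞} t^{-(1+θ)/(3+θ)} inf_{R>3} F(R) = ((3+θ)/(1+θ)) (hπ²/4)^{(1+θ)/(3+θ)}. -/
open Real Filter Set Topology

/-!
Put `a = t h π²`, `α = (1+θ)/(3+θ)` and `E_a(S) = a/S² + S^{θ+1}/(2^θ(θ+1))`. The substitution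
`S = 2 (a/4)^{1/(3+θ)} x` turns `E_a(S)` into `(a/4)^α (x⁻² + 2x^{θ+1}/(θ+1))`, and weighted
AM-GM (weights `α` and `2/(3+θ)`, geometric mean `1`) bounds the bracket below by `(3+θ)/(1+θ)`,
with equality at `x = 1`. Hence `min E_a = (3+θ)/(1+θ) (a/4)^α`, which scales like `t^α`.

Since `F(3+S) ≤ E_a(S)`, this is an upper bound for `inf F`. Conversely, fix `m < 1`. If
`(1-m)(R+c₆) ≥ 3+c₆` then `R-3 ≥ m(R+c₆)`, so `F(R) ≥ E_{m²a}(m(R+c₆)) ≥ m^{2α} min E_a`;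
otherwise `R+c₆` is bounded and already the first term of `F` is of order `t ≫ t^α`.
Letting `m → 1` gives the limit.
-/

namespace Lifshitz

noncomputable def energy (θ a S : ℝ) : ℝ := a / S ^ 2 + S ^ (θ + 1) / (2 ^ θ * (θ + 1))

noncomputable def minEnergy (θ a : ℝ) : ℝ := (3 + θ) / (1 + θ) * (a / 4) ^ ((1 + θ) / (3 + θ))

noncomputable def functional (θ c₆ a R : ℝ) : ℝ :=
  a / (R + c₆) ^ 2 + (R - 3) ^ (θ + 1) / (2 ^ θ * (θ + 1))

noncomputable def optimalScale (θ a : ℝ) : ℝ := 2 * (a / 4) ^ (3 + θ)⁻¹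

variable {θ : ℝ}

theorem three_add_div_one_add_le (hθ : -1 < θ) {x : ℝ} (hx : 0 < x) :
    (3 + θ) / (1 + θ) ≤ 1 / x ^ 2 + 2 * x ^ (θ + 1) / (θ + 1) := by
  have hθ1 : 0 < 1 + θ := by linarith
  have hθ3 : 0 < 3 + θ := by linarith
  have hθ1' : θ + 1 ≠ 0 := by linarith
  have amgm := geom_mean_le_arith_mean2_weighted (w₁ := (1 + θ) / (3 + θ)) (w₂ := 2 / (3 + θ))
    (p₁ := (x ^ 2)⁻¹) (p₂ := x ^ (θ + 1)) (by positivity) (by positivity) (by positivity)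
    (by positivity) (by field_simp; ring)
  have geom_mean_eq_one :
      ((x ^ 2)⁻¹) ^ ((1 + θ) / (3 + θ)) * (x ^ (θ + 1)) ^ (2 / (3 + θ)) = 1 := by
    rw [inv_rpow (by positivity), ← rpow_natCast, ← rpow_mul hx.le, ← rpow_mul hx.le,
      show ((2 : ℕ) : ℝ) * ((1 + θ) / (3 + θ)) = (θ + 1) * (2 / (3 + θ)) by push_cast; ring,
      inv_mul_cancel₀ (by positivity)]
  rw [geom_mean_eq_one] at amgm
  calc (3 + θ) / (1 + θ) = (3 + θ) / (1 + θ) * 1 := (mul_one _).symm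
    _ ≤ (3 + θ) / (1 + θ) * ((1 + θ) / (3 + θ) * (x ^ 2)⁻¹ + 2 / (3 + θ) * x ^ (θ + 1)) := by
      gcongr
    _ = 1 / x ^ 2 + 2 * x ^ (θ + 1) / (θ + 1) := by field_simp; ring

theorem energy_optimalScale_mul (hθ : 3 + θ ≠ 0) {a x : ℝ} (ha : 0 < a) (hx : 0 < x) :
    energy θ a (optimalScale θ a * x) =
      (a / 4) ^ ((1 + θ) / (3 + θ)) * (1 / x ^ 2 + 2 * x ^ (θ + 1) / (θ + 1)) := by
  rw [energy, optimalScale]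
  set ρ := (a / 4) ^ (3 + θ)⁻¹
  have hρ : 0 < ρ := by positivity
  have ha_eq : a = 4 * (ρ ^ 2 * ρ ^ (1 + θ)) := by
    rw [← rpow_natCast, ← rpow_add hρ, show ((2 : ℕ) : ℝ) + (1 + θ) = 3 + θ by push_cast; ring,
      rpow_inv_rpow (by positivity) hθ]
    ring
  have hρ1 : (a / 4) ^ ((1 + θ) / (3 + θ)) = ρ ^ (1 + θ) := by
    rw [← rpow_mul (by positivity)]; ring_nf
  rw [hρ1, mul_rpow (by positivity) hx.le, mul_rpow (by norm_num) hρ.le,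
    rpow_add_one two_ne_zero, add_comm θ 1]
  nth_rewrite 1 [ha_eq]
  field_simp
  ring

theorem energy_optimalScale (hθ : -1 < θ) {a : ℝ} (ha : 0 < a) :
    energy θ a (optimalScale θ a) = minEnergy θ a := by
  have h := energy_optimalScale_mul (θ := θ) (by linarith) ha one_pos
  rw [mul_one] at h
  rw [h, minEnergy, mul_comm]
  congr 1
  have : 1 + θ ≠ 0 := by linarith
  rw [one_pow, one_rpow, add_comm θ 1]
  field_simp
  ring

theorem minEnergy_le_energy (hθ : -1 < θ) {a S : ℝ} (ha : 0 < a) (hS : 0 < S) :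
    minEnergy θ a ≤ energy θ a S := by
  have hscale : 0 < optimalScale θ a := by unfold optimalScale; positivity
  have hx : 0 < S / optimalScale θ a := div_pos hS hscale
  calc minEnergy θ a = (a / 4) ^ ((1 + θ) / (3 + θ)) * ((3 + θ) / (1 + θ)) := mul_comm _ _
    _ ≤ (a / 4) ^ ((1 + θ) / (3 + θ)) *
        (1 / (S / optimalScale θ a) ^ 2 + 2 * (S / optimalScale θ a) ^ (θ + 1) / (θ + 1)) :=
      mul_le_mul_of_nonneg_left (three_add_div_one_add_le hθ hx) (by positivity)
    _ = energy θ a S := by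
      rw [← energy_optimalScale_mul (by linarith) ha hx, mul_div_cancel₀ S hscale.ne']

theorem minEnergy_mul (θ : ℝ) {t a : ℝ} (ht : 0 ≤ t) (ha : 0 ≤ a) :
    minEnergy θ (t * a) = t ^ ((1 + θ) / (3 + θ)) * minEnergy θ a := by
  rw [minEnergy, minEnergy, mul_div_assoc, mul_rpow ht (by positivity)]
  ring

theorem exists_lt_minEnergy_sq_mul (hθ : -1 < θ) {b B : ℝ} (hb : b < minEnergy θ B) :
    ∃ m ∈ Ioo (0 : ℝ) 1, b < minEnergy θ (m ^ 2 * B) := by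
  have hα : 0 ≤ (1 + θ) / (3 + θ) := div_nonneg (by linarith) (by linarith)
  have hcont : Continuous fun m : ℝ => minEnergy θ (m ^ 2 * B) := by
    unfold minEnergy
    exact ((continuous_rpow_const hα).comp (by fun_prop)).const_mul _
  have hlim : ∀ᶠ m in 𝓝[<] 1, b < minEnergy θ (m ^ 2 * B) := by
    refine tendsto_nhdsWithin_of_tendsto_nhds hcont.continuousAt |>.eventually (lt_mem_nhds ?_)
    simpa using hb
  exact (Filter.Eventually.and (Ioo_mem_nhdsLT one_pos) hlim).exists

variable {c₆ a : ℝ}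

theorem functional_nonneg (hθ : -1 ≤ θ) (ha : 0 ≤ a) {R : ℝ} (hR : 3 ≤ R) :
    0 ≤ functional θ c₆ a R := by
  have hθ1 : 0 ≤ θ + 1 := by linarith
  have hpow : 0 ≤ (R - 3) ^ (θ + 1) := rpow_nonneg (by linarith) _
  unfold functional
  positivity

theorem bddBelow_functional_image (hθ : -1 ≤ θ) (ha : 0 ≤ a) :
    BddBelow (functional θ c₆ a '' Ioi 3) := by
  refine ⟨0, ?_⟩
  rintro _ ⟨R, hR, rfl⟩
  exact functional_nonneg hθ ha (le_of_lt hR)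

theorem csInf_functional_le_minEnergy (hθ : -1 < θ) (hc₆ : -3 ≤ c₆) (ha : 0 < a) :
    sInf (functional θ c₆ a '' Ioi 3) ≤ minEnergy θ a := by
  have hS : 0 < optimalScale θ a := by unfold optimalScale; positivity
  have hθ1 : 0 < θ + 1 := by linarith
  calc sInf (functional θ c₆ a '' Ioi 3) ≤ functional θ c₆ a (3 + optimalScale θ a) :=
        csInf_le (bddBelow_functional_image hθ.le ha.le) (mem_image_of_mem _ (by simpa using hS))
    _ ≤ energy θ a (optimalScale θ a) := by
        unfold functional energy
        rw [add_sub_cancel_left]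
        gcongr
        linarith
    _ = minEnergy θ a := energy_optimalScale hθ ha

theorem min_le_functional (hθ : -1 < θ) (hc₆ : -3 < c₆) (ha : 0 < a) {m R : ℝ} (hm₀ : 0 < m)
    (hm₁ : m ≤ 1) (hR : 3 < R) :
    min (minEnergy θ (m ^ 2 * a)) (a * (1 - m) ^ 2 / (3 + c₆) ^ 2) ≤ functional θ c₆ a R := by
  have hS : 0 < R + c₆ := by linarith
  have hθ1 : 0 < θ + 1 := by linarith
  rcases le_or_gt (3 + c₆) ((1 - m) * (R + c₆)) with hfar | hnear
  · refine min_le_of_left_le ?_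
    have hmS : m * (R + c₆) ≤ R - 3 := by linarith
    calc minEnergy θ (m ^ 2 * a) ≤ energy θ (m ^ 2 * a) (m * (R + c₆)) :=
          minEnergy_le_energy hθ (by positivity) (by positivity)
      _ = a / (R + c₆) ^ 2 + (m * (R + c₆)) ^ (θ + 1) / (2 ^ θ * (θ + 1)) := by
          unfold energy
          field_simp
      _ ≤ functional θ c₆ a R := by
          unfold functional
          gcongr
  · refine min_le_of_right_le ?_
    have hsq : ((1 - m) * (R + c₆)) ^ 2 ≤ (3 + c₆) ^ 2 :=
      pow_le_pow_left₀ (mul_nonneg (by linarith) hS.le) hnear.le 2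
    calc a * (1 - m) ^ 2 / (3 + c₆) ^ 2 ≤ a / (R + c₆) ^ 2 := by
          rw [div_le_div_iff₀ (by nlinarith) (by positivity)]
          nlinarith
      _ ≤ functional θ c₆ a R :=
          le_add_of_nonneg_right <|
            div_nonneg (rpow_nonneg (by linarith) _) (mul_pos (by positivity) hθ1).le

theorem min_le_csInf_functional (hθ : -1 < θ) (hc₆ : -3 < c₆) (ha : 0 < a) {m : ℝ}
    (hm₀ : 0 < m) (hm₁ : m ≤ 1) :
    min (minEnergy θ (m ^ 2 * a)) (a * (1 - m) ^ 2 / (3 + c₆) ^ 2) ≤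
      sInf (functional θ c₆ a '' Ioi 3) := by
  refine le_csInf (nonempty_Ioi.image _) ?_
  rintro _ ⟨R, hR, rfl⟩
  exact min_le_functional hθ hc₆ ha hm₀ hm₁ hR

theorem tendsto_rpow_neg_mul_csInf_functional (hθ : -1 < θ) (hc₆ : -3 < c₆) {B : ℝ}
    (hB : 0 < B) :
    Tendsto (fun t => t ^ (-((1 + θ) / (3 + θ))) * sInf (functional θ c₆ (t * B) '' Ioi 3))
      atTop (𝓝 (minEnergy θ B)) := by
  set α := (1 + θ) / (3 + θ)
  have hα : α < 1 := (div_lt_one (by linarith)).2 (by linarith)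
  have hcancel : ∀ t : ℝ, 0 < t → t ^ (-α) * t ^ α = 1 := fun t ht ↦ by
    rw [← rpow_add ht, neg_add_cancel, rpow_zero]
  rw [tendsto_order]
  constructor
  · intro b hb
    obtain ⟨m, ⟨hm₀, hm₁⟩, hbm⟩ := exists_lt_minEnergy_sq_mul hθ hb
    have hgrow : Tendsto (fun t : ℝ ↦ t ^ (1 - α) * (B * (1 - m) ^ 2 / (3 + c₆) ^ 2)) atTop atTop :=
      (tendsto_rpow_atTop (by linarith)).atTop_mul_const <|
        div_pos (mul_pos hB (pow_pos (by linarith) 2)) (pow_pos (by linarith) 2)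
    filter_upwards [hgrow.eventually_gt_atTop b, eventually_gt_atTop 0] with t hbt ht
    calc b < min (minEnergy θ (m ^ 2 * B)) (t ^ (1 - α) * (B * (1 - m) ^ 2 / (3 + c₆) ^ 2)) :=
          lt_min hbm hbt
      _ = t ^ (-α) * min (minEnergy θ (m ^ 2 * (t * B))) (t * B * (1 - m) ^ 2 / (3 + c₆) ^ 2) := by
          rw [mul_min_of_nonneg _ _ (by positivity), mul_left_comm,
            minEnergy_mul θ ht.le (by positivity), ← mul_assoc, hcancel t ht, one_mul,
            sub_eq_neg_add, rpow_add_one ht.ne']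
          ring_nf
      _ ≤ t ^ (-α) * sInf (functional θ c₆ (t * B) '' Ioi 3) :=
          mul_le_mul_of_nonneg_left (min_le_csInf_functional hθ hc₆ (by positivity) hm₀ hm₁.le)
            (by positivity)
  · intro b hb
    filter_upwards [eventually_gt_atTop 0] with t ht
    calc t ^ (-α) * sInf (functional θ c₆ (t * B) '' Ioi 3) ≤ t ^ (-α) * minEnergy θ (t * B) :=
          mul_le_mul_of_nonneg_left (csInf_functional_le_minEnergy hθ (by linarith) (by positivity))
            (by positivity)
      _ = minEnergy θ B := by rw [minEnergy_mul θ ht.le hB.le, ← mul_assoc, hcancel t ht, one_mul]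
      _ < b := hb

end Lifshitz

/-- The optimization identifying the one-dimensional Lifshitz constant:
`t^{-(1+θ)/(3+θ)} · inf_{R>3} [t h π²/(R+c₆)² + (R-3)^{θ+1}/(2^θ(θ+1))]`
converges, as `t → ∞`, to `((3+θ)/(1+θ)) (hπ²/4)^{(1+θ)/(3+θ)}`. -/
theorem stmt_8 (θ h c₆ : ℝ) (hθ : 0 < θ) (hh : 0 < h) (hc₆ : 0 ≤ c₆) :
    Tendsto (fun t : ℝ =>
        t ^ (-((1 + θ) / (3 + θ))) *
          sInf ((fun R : ℝ => t * h * π ^ 2 / (R + c₆) ^ 2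
            + (R - 3) ^ (θ + 1) / (2 ^ θ * (θ + 1))) '' Set.Ioi 3))
      atTop
      (nhds ((3 + θ) / (1 + θ) * (h * π ^ 2 / 4) ^ ((1 + θ) / (3 + θ)))) := by
  have hlim := Lifshitz.tendsto_rpow_neg_mul_csInf_functional (c₆ := c₆) (by linarith : -1 < θ)
    (by linarith) (by positivity : 0 < h * π ^ 2)
  convert hlim using 6 with t R
  · rw [Lifshitz.functional, mul_assoc]
  · rfl
end
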